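/- arXiv:2010.16090 — 2 statements merged into one kernel-verified Lean document; each statement's English description precedes it below -/
import Mathlib

section
/- Let γ > 1 and v* > 0. There exist constants C > 0 and δ* > 0 such that for any δ ∈ (0, δ*) and any v, w > 0 with |p(w) − p(v*)| ≤ δ and such that either Q(v|w) < δ or |p(v) − p(w)| < δ, one has (p(v) − p(w))² ≤ C · Q(v|w). -/
open MeasureTheory Real Set

/-- Pressure `p(v) = v^(-γ)`. -/
noncomputable def pres (γ v : ℝ) : ℝ := v ^ (-γ)

/-- Internal energy `Q(v) = v^(1-γ)/(γ-1)`. -/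
noncomputable def Qint (γ v : ℝ) : ℝ := v ^ (1 - γ) / (γ - 1)

/-- Relative internal energy `Q(v|w) = Q(v) - Q(w) - Q'(w)(v-w)`, with `Q'(w) = -p(w)`. -/
noncomputable def Qrel (γ v w : ℝ) : ℝ := Qint γ v - Qint γ w + pres γ w * (v - w)

/-!
On a compact subinterval `[m, M]` of `(0, ∞)` the pressure is Lipschitz and `Q` is strongly
convex, `Q(v|w) ≥ γ M^(-γ-1) (v - w)² / 2`, so `(p(v) - p(w))² ≤ C Q(v|w)` there. The bound
`|p(w) - p(v*)| ≤ δ` confines `w` to an interval `[a, b]` around `v*`. If `|p(v) - p(w)| < δ`, the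
same holds for `v`. If `Q(v|w) < δ`, then `v ∈ [a/2, 2b]`: `Q(·|w)` decreases to `0` at `w` and
increases afterwards, so leaving `[a/2, 2b]` would force `Q(v|w) ≥ γ (2b)^(-γ-1) a² / 8`.
-/

/-- The relative functional `F(v|w)`; the derivative `F'` is passed explicitly. -/
def relative (F F' : ℝ → ℝ) (v w : ℝ) : ℝ := F v - F w - F' w * (v - w)

section Relative

variable {F F' : ℝ → ℝ} {s : Set ℝ} {v w : ℝ}

@[simp] lemma relative_self (F F' : ℝ → ℝ) (w : ℝ) : relative F F' w w = 0 := by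
  simp [relative]

lemma hasDerivAt_relative (hF : HasDerivAt F (F' v) v) (w : ℝ) :
    HasDerivAt (relative F F' · w) (F' v - F' w) v := by
  simpa [relative] using
    (hF.sub_const (F w)).fun_sub (((hasDerivAt_id v).sub_const w).const_mul (F' w))

lemma antitoneOn_relative (hs : Convex ℝ s) (hF : ∀ x ∈ s, HasDerivAt F (F' x) x)
    (hF' : MonotoneOn F' s) (hw : w ∈ s) : AntitoneOn (relative F F' · w) (s ∩ Iic w) := by
  have hD : ∀ x ∈ s ∩ Iic w, HasDerivAt (relative F F' · w) (F' x - F' w) x :=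
    fun x hx => hasDerivAt_relative (hF x hx.1) w
  refine antitoneOn_of_hasDerivWithinAt_nonpos (hs.inter (convex_Iic w))
    (fun x hx => (hD x hx).continuousAt.continuousWithinAt)
    (fun x hx => (hD x (interior_subset hx)).hasDerivWithinAt) fun x hx => ?_
  have hx := interior_subset hx
  exact sub_nonpos.2 (hF' hx.1 hw hx.2)

lemma monotoneOn_relative (hs : Convex ℝ s) (hF : ∀ x ∈ s, HasDerivAt F (F' x) x)
    (hF' : MonotoneOn F' s) (hw : w ∈ s) : MonotoneOn (relative F F' · w) (s ∩ Ici w) := by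
  have hD : ∀ x ∈ s ∩ Ici w, HasDerivAt (relative F F' · w) (F' x - F' w) x :=
    fun x hx => hasDerivAt_relative (hF x hx.1) w
  refine monotoneOn_of_hasDerivWithinAt_nonneg (hs.inter (convex_Ici w))
    (fun x hx => (hD x hx).continuousAt.continuousWithinAt)
    (fun x hx => (hD x (interior_subset hx)).hasDerivWithinAt) fun x hx => ?_
  have hx := interior_subset hx
  exact sub_nonneg.2 (hF' hw hx.1 hx.2)

lemma relative_nonneg (hs : Convex ℝ s) (hF : ∀ x ∈ s, HasDerivAt F (F' x) x)
    (hF' : MonotoneOn F' s) (hv : v ∈ s) (hw : w ∈ s) : 0 ≤ relative F F' v w := by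
  rcases le_total v w with hvw | hvw
  · simpa using antitoneOn_relative hs hF hF' hw ⟨hv, hvw⟩ ⟨hw, le_refl w⟩ hvw
  · simpa using monotoneOn_relative hs hF hF' hw ⟨hw, le_refl w⟩ ⟨hv, hvw⟩ hvw

/-- `relative_nonneg` applied to `F - κ x² / 2`. -/
lemma mul_sq_le_relative {κ : ℝ} (hs : Convex ℝ s) (hF : ∀ x ∈ s, HasDerivAt F (F' x) x)
    (hF' : MonotoneOn (fun x => F' x - κ * x) s) (hv : v ∈ s) (hw : w ∈ s) :
    κ / 2 * (v - w) ^ 2 ≤ relative F F' v w := by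
  have hG : ∀ x ∈ s, HasDerivAt (fun x => F x - κ / 2 * x ^ 2) (F' x - κ * x) x := fun x hx =>
    ((hF x hx).fun_sub ((hasDerivAt_pow 2 x).const_mul (κ / 2))).congr_deriv
      (by push_cast; ring)
  have := relative_nonneg hs hG hF' hv hw
  simp only [relative] at this ⊢
  linarith

end Relative

section Pressure

variable {γ : ℝ}

lemma hasDerivAt_pres (γ : ℝ) {x : ℝ} (hx : 0 < x) :
    HasDerivAt (pres γ) (-γ * x ^ (-γ - 1)) x :=
  hasDerivAt_rpow_const (Or.inl hx.ne')

lemma hasDerivAt_Qint (hγ : γ ≠ 1) {x : ℝ} (hx : 0 < x) :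
    HasDerivAt (Qint γ) (-pres γ x) x := by
  refine ((hasDerivAt_rpow_const (p := 1 - γ) (Or.inl hx.ne')).div_const (γ - 1)).congr_deriv ?_
  rw [pres, sub_sub_cancel_left, div_eq_iff (sub_ne_zero.2 hγ)]
  ring

lemma Qrel_eq_relative (γ v w : ℝ) :
    Qrel γ v w = relative (Qint γ) (fun x => -pres γ x) v w := by
  simp only [Qrel, relative]
  ring

lemma strictAntiOn_pres (hγ : 0 < γ) : StrictAntiOn (pres γ) (Ioi 0) :=
  strictAntiOn_rpow_Ioi_of_exponent_neg (neg_neg_of_pos hγ)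

lemma pres_rpow_neg_inv (hγ : γ ≠ 0) {y : ℝ} (hy : 0 ≤ y) : pres γ (y ^ (-γ⁻¹)) = y := by
  rw [pres, ← rpow_mul hy, neg_mul_neg, inv_mul_cancel₀ hγ, rpow_one]

lemma mem_Icc_of_pres_mem_Icc (hγ : 0 < γ) {x lo hi : ℝ} (hx : 0 < x) (hlo : 0 < lo)
    (h : pres γ x ∈ Icc lo hi) : x ∈ Icc (hi ^ (-γ⁻¹)) (lo ^ (-γ⁻¹)) := by
  have hhi : 0 < hi := hlo.trans_le (h.1.trans h.2)
  refine ⟨((strictAntiOn_pres hγ).le_iff_ge hx (rpow_pos_of_pos hhi _)).1 ?_,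
    ((strictAntiOn_pres hγ).le_iff_ge (rpow_pos_of_pos hlo _) hx).1 ?_⟩
  · rw [pres_rpow_neg_inv hγ.ne' hhi.le]
    exact h.2
  · rw [pres_rpow_neg_inv hγ.ne' hlo.le]
    exact h.1

lemma abs_pres_sub_le (hγ : 0 ≤ γ) {m x y : ℝ} (hm : 0 < m) (hx : m ≤ x) (hy : m ≤ y) :
    |pres γ x - pres γ y| ≤ γ * m ^ (-γ - 1) * |x - y| := by
  refine Convex.norm_image_sub_le_of_norm_hasDerivWithin_le
    (fun z hz => (hasDerivAt_pres γ (hm.trans_le hz)).hasDerivWithinAt) (fun z hz => ?_)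
    (convex_Ici m) hy hx
  rw [norm_mul, norm_neg, Real.norm_of_nonneg hγ,
    Real.norm_of_nonneg (rpow_pos_of_pos (hm.trans_le hz) _).le]
  exact mul_le_mul_of_nonneg_left (rpow_le_rpow_of_nonpos hm hz (by linarith)) hγ

lemma monotoneOn_neg_pres (hγ : 0 ≤ γ) : MonotoneOn (fun x => -pres γ x) (Ioi 0) :=
  fun _ hx _ _ hxy => neg_le_neg (rpow_le_rpow_of_nonpos hx hxy (neg_nonpos.2 hγ))

lemma monotoneOn_neg_pres_sub_mul (hγ : 0 ≤ γ) (M : ℝ) :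
    MonotoneOn (fun x => -pres γ x - γ * M ^ (-γ - 1) * x) (Ioc 0 M) := by
  have hD : ∀ x ∈ Ioc 0 M, HasDerivAt (fun x => -pres γ x - γ * M ^ (-γ - 1) * x)
      (γ * x ^ (-γ - 1) - γ * M ^ (-γ - 1)) x := fun x hx =>
    ((hasDerivAt_pres γ hx.1).fun_neg.fun_sub
      ((hasDerivAt_id x).const_mul (γ * M ^ (-γ - 1)))).congr_deriv (by ring)
  refine monotoneOn_of_hasDerivWithinAt_nonneg (convex_Ioc 0 M)
    (fun x hx => (hD x hx).continuousAt.continuousWithinAt)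
    (fun x hx => (hD x (interior_subset hx)).hasDerivWithinAt) fun x hx => ?_
  have hx := interior_subset hx
  exact sub_nonneg.2 (mul_le_mul_of_nonneg_left
    (rpow_le_rpow_of_nonpos hx.1 hx.2 (by linarith)) hγ)

lemma antitoneOn_Qrel (hγ0 : 0 ≤ γ) (hγ1 : γ ≠ 1) {w : ℝ} (hw : 0 < w) :
    AntitoneOn (Qrel γ · w) (Ioi 0 ∩ Iic w) := by
  simpa only [Qrel_eq_relative] using antitoneOn_relative (convex_Ioi 0)
    (fun x hx => hasDerivAt_Qint hγ1 hx) (monotoneOn_neg_pres hγ0) hw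

lemma monotoneOn_Qrel (hγ0 : 0 ≤ γ) (hγ1 : γ ≠ 1) {w : ℝ} (hw : 0 < w) :
    MonotoneOn (Qrel γ · w) (Ioi 0 ∩ Ici w) := by
  simpa only [Qrel_eq_relative] using monotoneOn_relative (convex_Ioi 0)
    (fun x hx => hasDerivAt_Qint hγ1 hx) (monotoneOn_neg_pres hγ0) hw

lemma mul_sq_le_Qrel (hγ0 : 0 ≤ γ) (hγ1 : γ ≠ 1) {M v w : ℝ} (hv : v ∈ Ioc 0 M)
    (hw : w ∈ Ioc 0 M) : γ * M ^ (-γ - 1) / 2 * (v - w) ^ 2 ≤ Qrel γ v w := by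
  rw [Qrel_eq_relative]
  exact mul_sq_le_relative (convex_Ioc 0 M) (fun x hx => hasDerivAt_Qint hγ1 hx.1)
    (monotoneOn_neg_pres_sub_mul hγ0 M) hv hw

lemma sq_pres_sub_le_mul_Qrel (hγ0 : 0 < γ) (hγ1 : γ ≠ 1) {m M v w : ℝ} (hm : 0 < m)
    (hv : v ∈ Icc m M) (hw : w ∈ Icc m M) :
    (pres γ v - pres γ w) ^ 2 ≤ 2 * (γ * m ^ (-γ - 1)) ^ 2 / (γ * M ^ (-γ - 1)) * Qrel γ v w := by
  set L := γ * m ^ (-γ - 1)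
  set κ := γ * M ^ (-γ - 1)
  have hκ : 0 < κ := mul_pos hγ0 (rpow_pos_of_pos (hm.trans_le (hv.1.trans hv.2)) _)
  have hlip : |pres γ v - pres γ w| ≤ L * |v - w| := abs_pres_sub_le hγ0.le hm hv.1 hw.1
  have hQ : κ / 2 * (v - w) ^ 2 ≤ Qrel γ v w :=
    mul_sq_le_Qrel hγ0.le hγ1 ⟨hm.trans_le hv.1, hv.2⟩ ⟨hm.trans_le hw.1, hw.2⟩
  calc (pres γ v - pres γ w) ^ 2 = |pres γ v - pres γ w| ^ 2 := (sq_abs _).symm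
    _ ≤ (L * |v - w|) ^ 2 := pow_le_pow_left₀ (abs_nonneg _) hlip 2
    _ = 2 * L ^ 2 / κ * (κ / 2 * (v - w) ^ 2) := by
      rw [mul_pow, sq_abs]
      field_simp
    _ ≤ 2 * L ^ 2 / κ * Qrel γ v w := mul_le_mul_of_nonneg_left hQ (by positivity)

lemma mem_Icc_of_Qrel_lt (hγ0 : 0 < γ) (hγ1 : γ ≠ 1) {a b v w : ℝ} (ha : 0 < a) (hv : 0 < v)
    (hw : w ∈ Icc a b) (hQ : Qrel γ v w < γ * (2 * b) ^ (-γ - 1) / 8 * a ^ 2) :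
    v ∈ Icc (a / 2) (2 * b) := by
  obtain ⟨haw, hwb⟩ := hw
  set κ := γ * (2 * b) ^ (-γ - 1)
  have hw0 : 0 < w := ha.trans_le haw
  have hκ : 0 < κ := mul_pos hγ0 (rpow_pos_of_pos (by linarith) _)
  have hquad : ∀ x ∈ Icc (a / 2) (2 * b), κ / 2 * (x - w) ^ 2 ≤ Qrel γ x w := fun x hx =>
    mul_sq_le_Qrel hγ0.le hγ1 ⟨by linarith [hx.1], hx.2⟩ ⟨hw0, by linarith⟩
  constructor
  · by_contra! hva
    have hmono : Qrel γ (a / 2) w ≤ Qrel γ v w :=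
      antitoneOn_Qrel hγ0.le hγ1 hw0 ⟨hv, mem_Iic.2 (by linarith)⟩
        ⟨half_pos ha, mem_Iic.2 (by linarith)⟩ hva.le
    have hsq : (a / 2) ^ 2 ≤ (a / 2 - w) ^ 2 := by nlinarith
    nlinarith [hquad (a / 2) ⟨le_rfl, by linarith⟩]
  · by_contra! hvb
    have hmono : Qrel γ (2 * b) w ≤ Qrel γ v w :=
      monotoneOn_Qrel hγ0.le hγ1 hw0 ⟨mem_Ioi.2 (by linarith), mem_Ici.2 (by linarith)⟩
        ⟨hv, mem_Ici.2 (by linarith)⟩ hvb.le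
    have hsq : (a / 2) ^ 2 ≤ (2 * b - w) ^ 2 := by nlinarith
    nlinarith [hquad (2 * b) ⟨by linarith, le_rfl⟩]

end Pressure

/-- Lemma A.3 (estimate (A.8)): the squared pressure difference is controlled by the
relative internal energy under a smallness condition. -/
theorem pressure_controlled_by_entropy (γ vstar : ℝ) (hγ : 1 < γ) (hvstar : 0 < vstar) :
    ∃ C δstar : ℝ, 0 < C ∧ 0 < δstar ∧
      ∀ δ : ℝ, 0 < δ → δ < δstar →
      ∀ v w : ℝ, 0 < v → 0 < w →
        |pres γ w - pres γ vstar| ≤ δ →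
        (Qrel γ v w < δ ∨ |pres γ v - pres γ w| < δ) →
        (pres γ v - pres γ w) ^ 2 ≤ C * Qrel γ v w := by
  have hγ0 : 0 < γ := by linarith
  set p := pres γ vstar
  have hp : 0 < p := rpow_pos_of_pos hvstar _
  set a := (2 * p) ^ (-γ⁻¹)
  set b := (p / 2) ^ (-γ⁻¹)
  set κ := γ * (2 * b) ^ (-γ - 1)
  have ha : 0 < a := rpow_pos_of_pos (by positivity) _
  have hκ : 0 < κ := by positivity
  have hab : ∀ x, 0 < x → |pres γ x - p| ≤ p / 2 → x ∈ Icc a b := fun x hx h =>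
    have := abs_le.1 h
    mem_Icc_of_pres_mem_Icc hγ0 hx (by positivity) ⟨by linarith, by linarith⟩
  refine ⟨2 * (γ * (a / 2) ^ (-γ - 1)) ^ 2 / κ, min (p / 4) (κ / 8 * a ^ 2), by positivity,
    by positivity, fun δ _ hδs v w hv hw hpw hvw => ?_⟩
  have hδp : δ < p / 4 := hδs.trans_le (min_le_left _ _)
  have hwab : w ∈ Icc a b := hab w hw (by linarith)
  have hvab : v ∈ Icc (a / 2) (2 * b) := by
    rcases hvw with hQ | hpv
    · exact mem_Icc_of_Qrel_lt hγ0 hγ.ne' ha hv hwab (hQ.trans (hδs.trans_le (min_le_right _ _)))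
    · have hv' := hab v hv ((abs_sub_le _ (pres γ w) _).trans (by linarith))
      exact ⟨by linarith [hv'.1], by linarith [hv'.2]⟩
  exact sq_pres_sub_le_mul_Qrel hγ0 hγ.ne' (half_pos ha) hvab
    ⟨by linarith [hwab.1], by linarith [hwab.1, hwab.2]⟩
end

section
/- Fix γ > 1 and a constant state (v*, u*) ∈ (0,∞) × ℝ. There exist constants δ₀, C, C₀ > 0 such that for any ε, λ > 0 with ε/λ < δ₀ and λ < δ₀ the following holds. Let ṽ₀, h̃₀, w, b₁, b₂, a : ℝ → ℝ be measurable functions such that for all x ∈ ℝ: |ṽ₀(x) − v*| ≤ C δ₀, |h̃₀(x) − u*| ≤ C δ₀, ṽ₀(x) ≥ 1/C, and √(b₁(x)² + b₂(x)²) ≤ C (ε/λ) |w(x)|; assume w is either everywhere positive or everywhere negative on ℝ, b₁, b₂ ∈ L¹(ℝ), ∫_ℝ |w| dx = λ, and ‖a‖_{L∞(ℝ)} ≤ 1. Let v : ℝ → (0,∞) and h : ℝ → ℝ be measurable such that the functions x ↦ w(x)(|h(x) − h̃₀(x)|²/2 + Q(v(x)|ṽ₀(x))) and x ↦ a(x)(−b₁(x)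 p'(ṽ₀(x))(v(x) − ṽ₀(x)) + b₂(x)(h(x) − h̃₀(x))) are integrable, and define Y := ∫_ℝ w (|h − h̃₀|²/2 + Q(v|ṽ₀)) dx + ∫_ℝ a (−b₁ p'(ṽ₀)(v − ṽ₀) + b₂ (h − h̃₀)) dx. If sgn(w) · Y ≤ ε², then ∫_ℝ |w| |h − h̃₀|² dx + ∫_ℝ |w| Q(v|ṽ₀) dx ≤ C ε²/λ and |Y| ≤ C₀ ε²/λ. -/
open MeasureTheory Real Set

/-! Write `g = |h - h̃₀|²/2 + Q(v|ṽ₀)` and `I = ∫ |w| g`; since `w` has a sign, the first integral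
of `Y` is `sgn(w) I`. For `ṽ₀` within `v*/2` of `v*`, `Q(·|ṽ₀)` grows quadratically near `ṽ₀` and
linearly far from it, so by Young's inequality the integrand of the second integral, whose
coefficients are `O(ε/λ) |w|`, is at most `|w| (g/2 + O((ε/λ)²))`. Hence
`I ≤ ε² + I/2 + O(ε²/λ)`, and `ε² ≤ δ₀ ε²/λ` because `λ < δ₀`. -/

theorem le_of_hasDerivAt_of_mul_sub_nonneg {f f' : ℝ → ℝ} {t v : ℝ}
    (hf : ∀ x ∈ uIcc t v, HasDerivAt f (f' x) x) (hf' : ∀ x ∈ uIcc t v, 0 ≤ f' x * (x - t)) :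
    f t ≤ f v := by
  have hcont : ContinuousOn f (uIcc t v) := fun x hx => (hf x hx).continuousAt.continuousWithinAt
  have hderiv : ∀ x ∈ interior (uIcc t v), HasDerivWithinAt f (f' x) (interior (uIcc t v)) x :=
    fun x hx => (hf x (interior_subset hx)).hasDerivWithinAt
  rcases le_total t v with htv | hvt
  · rw [uIcc_of_le htv] at hcont hderiv hf'
    refine monotoneOn_of_hasDerivWithinAt_nonneg (convex_Icc t v) hcont hderiv
      (fun x hx => ?_) (left_mem_Icc.2 htv) (right_mem_Icc.2 htv) htv
    rw [interior_Icc] at hx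
    exact nonneg_of_mul_nonneg_left (hf' x (Ioo_subset_Icc_self hx)) (sub_pos.2 hx.1)
  · rw [uIcc_of_ge hvt] at hcont hderiv hf'
    refine antitoneOn_of_hasDerivWithinAt_nonpos (convex_Icc v t) hcont hderiv
      (fun x hx => ?_) (left_mem_Icc.2 hvt) (right_mem_Icc.2 hvt) hvt
    rw [interior_Icc] at hx
    exact nonpos_of_mul_nonneg_left (hf' x (Ioo_subset_Icc_self hx)) (sub_neg.2 hx.2)

section
variable {γ : ℝ}

@[simp]
theorem Qrel_self (t : ℝ) : Qrel γ t t = 0 := by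
  simp [Qrel]

theorem hasDerivAt_Qrel (hγ : 1 < γ) (t : ℝ) {x : ℝ} (hx : 0 < x) :
    HasDerivAt (fun v => Qrel γ v t) (pres γ t - pres γ x) x := by
  have hpow := (Real.hasDerivAt_rpow_const (p := 1 - γ) (Or.inl hx.ne')).div_const (γ - 1)
  refine ((hpow.sub_const (Qint γ t)).add
    (((hasDerivAt_id x).sub_const t).const_mul (pres γ t))).congr_deriv ?_
  unfold pres
  field_simp [show γ - 1 ≠ 0 by linarith]
  ring_nf

/-- `x ↦ -pres γ x - c x` with `c = -p'(2t)` is monotone on `(0, 2t]`, since `-p'` is decreasing. -/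
theorem pres_sub_pres_sub_mul_nonneg (hγ : 0 < γ) {t x : ℝ} (hx : 0 < x) (hx2 : x ≤ 2 * t) :
    0 ≤ (pres γ t - pres γ x - γ * (2 * t) ^ (-γ - 1) * (x - t)) * (x - t) := by
  set c := γ * (2 * t) ^ (-γ - 1)
  have hderiv : ∀ y, 0 < y → HasDerivAt (fun y => -pres γ y - c * y) (γ * y ^ (-γ - 1) - c) y :=
    fun y hy => (((Real.hasDerivAt_rpow_const (Or.inl hy.ne')).neg.sub
      ((hasDerivAt_id y).const_mul c))).congr_deriv (by ring_nf)
  have hmono : MonotoneOn (fun y => -pres γ y - c * y) (Ioc 0 (2 * t)) := by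
    refine monotoneOn_of_hasDerivWithinAt_nonneg (convex_Ioc 0 (2 * t))
      (fun y hy => (hderiv y hy.1).continuousAt.continuousWithinAt)
      (fun y hy => (hderiv y (interior_subset hy).1).hasDerivWithinAt) (fun y hy => ?_)
    rw [interior_Ioc] at hy
    have : (2 * t) ^ (-γ - 1) ≤ y ^ (-γ - 1) :=
      Real.rpow_le_rpow_of_nonpos hy.1 hy.2.le (by linarith)
    simp only [c]
    nlinarith
  have ht : t ∈ Ioc 0 (2 * t) := ⟨by linarith, by linarith⟩
  rcases le_total t x with htx | hxt
  · have := hmono ht ⟨hx, hx2⟩ htx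
    nlinarith
  · have := hmono ⟨hx, hx2⟩ ht hxt
    nlinarith

theorem sq_le_Qrel (hγ : 1 < γ) {t v : ℝ} (hv : 0 < v) (hv2 : v ≤ 2 * t) :
    γ * (2 * t) ^ (-γ - 1) / 2 * (v - t) ^ 2 ≤ Qrel γ v t := by
  set c := γ * (2 * t) ^ (-γ - 1)
  have key := le_of_hasDerivAt_of_mul_sub_nonneg (t := t) (v := v)
    (f := fun y => Qrel γ y t - c / 2 * (y - t) ^ 2)
    (f' := fun y => pres γ t - pres γ y - c * (y - t)) (fun y hy => ?_) (fun y hy => ?_)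
  · simpa using key
  all_goals
    have hy0 : 0 < y := lt_of_lt_of_le (lt_min (by linarith) hv) hy.1
  · exact ((hasDerivAt_Qrel hγ t hy0).sub
      ((((hasDerivAt_id y).sub_const t).pow 2).const_mul (c / 2))).congr_deriv (by simp; ring)
  · exact pres_sub_pres_sub_mul_nonneg (by linarith) hy0 (hy.2.trans (max_le (by linarith) hv2))

theorem mul_sub_le_Qrel (hγ : 1 < γ) {t v : ℝ} (ht : 0 < t) (hv : 2 * t ≤ v) :
    γ * (2 * t) ^ (-γ - 1) / 2 * t * (v - t) ≤ Qrel γ v t := by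
  set c := γ * (2 * t) ^ (-γ - 1)
  have hslope : c * t ≤ pres γ t - pres γ (2 * t) := by
    have := pres_sub_pres_sub_mul_nonneg (γ := γ) (by linarith) (t := t) (by linarith) le_rfl
    nlinarith
  have hstart : c / 2 * t * (2 * t - t) ≤ Qrel γ (2 * t) t := by
    have := sq_le_Qrel hγ (t := t) (by linarith) le_rfl
    nlinarith
  have key := le_of_hasDerivAt_of_mul_sub_nonneg (t := 2 * t) (v := v)
    (f := fun y => Qrel γ y t - c / 2 * t * (y - t))
    (f' := fun y => pres γ t - pres γ y - c / 2 * t) (fun y hy => ?_) (fun y hy => ?_)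
  · linarith
  all_goals
    rw [uIcc_of_le hv] at hy
    have hy0 : 0 < y := by linarith [hy.1]
  · exact ((hasDerivAt_Qrel hγ t hy0).sub
      (((hasDerivAt_id y).sub_const t).const_mul (c / 2 * t))).congr_deriv (by simp)
  · have : pres γ y ≤ pres γ (2 * t) := Real.rpow_le_rpow_of_nonpos (by linarith) hy.1 (by linarith)
    have : 0 ≤ c * t := by positivity
    exact mul_nonneg (by linarith) (by linarith [hy.1])

theorem mul_min_le_Qrel (hγ : 1 < γ) {t v : ℝ} (ht : 0 < t) (hv : 0 < v) :
    γ * (2 * t) ^ (-γ - 1) / 2 * (|v - t| * min |v - t| t) ≤ Qrel γ v t := by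
  rcases le_total v (2 * t) with hv2 | hv2
  · rw [min_eq_left (abs_le.2 ⟨by linarith, by linarith⟩), ← sq, sq_abs]
    exact sq_le_Qrel hγ hv hv2
  · rw [min_eq_right (le_abs.2 (Or.inl (by linarith))), abs_of_nonneg (by linarith)]
    linarith [mul_sub_le_Qrel hγ ht hv2]

theorem Qrel_nonneg (hγ : 1 < γ) {t v : ℝ} (ht : 0 < t) (hv : 0 < v) : 0 ≤ Qrel γ v t :=
  (mul_min_le_Qrel hγ ht hv).trans' <| by
    have := Real.rpow_pos_of_pos (mul_pos two_pos ht) (-γ - 1)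
    have := le_min (abs_nonneg (v - t)) ht.le
    positivity

theorem mul_min_le_Qrel_of_abs_sub_le (hγ : 1 < γ) {s t v : ℝ} (hs : 0 < s)
    (ht : |t - s| ≤ s / 2) (hv : 0 < v) :
    γ * (3 * s) ^ (-γ - 1) / 2 * (|v - t| * min |v - t| (s / 2)) ≤ Qrel γ v t := by
  obtain ⟨hts, hst⟩ := abs_le.1 ht
  refine le_trans ?_ (mul_min_le_Qrel hγ (by linarith) hv)
  have : (3 * s) ^ (-γ - 1) ≤ (2 * t) ^ (-γ - 1) :=
    Real.rpow_le_rpow_of_nonpos (by linarith) (by linarith) (by linarith)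
  have ht0 : 0 < t := by linarith
  gcongr
  linarith

theorem abs_neg_mul_rpow_le_of_abs_sub_le (hγ : 0 < γ) {s t : ℝ} (hs : 0 < s)
    (ht : |t - s| ≤ s / 2) : |-γ * t ^ (-γ - 1)| ≤ γ * (s / 2) ^ (-γ - 1) := by
  have hst : s / 2 ≤ t := by linarith [(abs_le.1 ht).1]
  have ht0 : 0 < t := by linarith
  rw [abs_mul, abs_neg, abs_of_pos hγ, abs_of_pos (Real.rpow_pos_of_pos ht0 _)]
  exact mul_le_mul_of_nonneg_left
    (Real.rpow_le_rpow_of_nonpos (half_pos hs) hst (by linarith)) hγ.le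

end

theorem mul_abs_le_half_add_sq_div {c R Q d η : ℝ} (hc : 0 < c)
    (hQ : c / 2 * (|d| * min |d| R) ≤ Q) (hη : η ≤ c * R / 4) :
    η * |d| ≤ Q / 2 + η ^ 2 / c := by
  rcases le_total |d| R with hd | hd
  · rw [min_eq_left hd] at hQ
    have : c * (η * |d|) ≤ c * (c / 4 * (|d| * |d|) + η ^ 2 / c) := by
      rw [mul_add, mul_div_cancel₀ _ hc.ne']
      nlinarith [sq_nonneg (c * |d| - 2 * η)]
    nlinarith [le_of_mul_le_mul_left this hc]
  · rw [min_eq_right hd] at hQ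
    have : η * |d| ≤ c * R / 4 * |d| := mul_le_mul_of_nonneg_right hη (abs_nonneg d)
    nlinarith [div_nonneg (sq_nonneg η) hc.le]

theorem abs_mul_add_mul_le {a b₁ b₂ w p d e c R Q M η : ℝ} (ha : |a| ≤ 1)
    (hb : √(b₁ ^ 2 + b₂ ^ 2) ≤ η * |w|) (hp : |p| ≤ M) (hc : 0 < c)
    (hQ : c / 2 * (|d| * min |d| R) ≤ Q) (hηM : η * M ≤ c * R / 4) :
    |a * (-b₁ * p * d + b₂ * e)| ≤ |w| * ((e ^ 2 / 2 + Q) / 2 + η ^ 2 * (M ^ 2 / c + 1)) := by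
  have hb₁ : |b₁| ≤ η * |w| := (Real.abs_le_sqrt (by nlinarith [sq_nonneg b₂])).trans hb
  have hb₂ : |b₂| ≤ η * |w| := (Real.abs_le_sqrt (by nlinarith [sq_nonneg b₁])).trans hb
  have hηw : 0 ≤ η * |w| := (Real.sqrt_nonneg _).trans hb
  have hd : η * M * |d| ≤ Q / 2 + (η * M) ^ 2 / c :=
    mul_abs_le_half_add_sq_div hc hQ hηM
  have he : η * |e| ≤ e ^ 2 / 4 + η ^ 2 := by
    nlinarith [sq_nonneg (|e| - 2 * η), sq_abs e]
  calc |a * (-b₁ * p * d + b₂ * e)| ≤ 1 * (|b₁| * |p| * |d| + |b₂| * |e|) := by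
        rw [abs_mul]
        gcongr
        refine (abs_add_le _ _).trans_eq ?_
        simp only [abs_mul, abs_neg]
    _ ≤ η * |w| * M * |d| + η * |w| * |e| := by
        rw [one_mul]
        gcongr
    _ = |w| * (η * M * |d| + η * |e|) := by ring
    _ ≤ |w| * ((e ^ 2 / 2 + Q) / 2 + η ^ 2 * (M ^ 2 / c + 1)) := by
        refine mul_le_mul_of_nonneg_left ?_ (abs_nonneg w)
        linarith [show (η * M) ^ 2 / c = η ^ 2 * (M ^ 2 / c) by ring]

section
variable {α : Type*} [MeasurableSpace α] {μ : Measure α}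

theorem MeasureTheory.Integrable.abs_mul_of_nonneg {w g : α → ℝ}
    (hwg : Integrable (fun x => w x * g x) μ) (hg : ∀ x, 0 ≤ g x) :
    Integrable (fun x => |w x| * g x) μ :=
  hwg.abs.congr (.of_forall fun x => by simp only [abs_mul, abs_of_nonneg (hg x)])

theorem lintegral_ofReal_le_ofReal_integral {f G : α → ℝ} (hG : Integrable G μ)
    (hG0 : 0 ≤ᵐ[μ] G) (hfG : f ≤ᵐ[μ] G) :
    ∫⁻ x, ENNReal.ofReal (f x) ∂μ ≤ ENNReal.ofReal (∫ x, G x ∂μ) := by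
  rw [ofReal_integral_eq_lintegral_ofReal hG hG0]
  exact lintegral_mono_ae (hfG.mono fun x hx => ENNReal.ofReal_le_ofReal hx)

theorem lintegral_abs_mul_sq_add_lintegral_abs_mul_le {w e Q : α → ℝ} (hQ : ∀ x, 0 ≤ Q x)
    (hwg : Integrable (fun x => |w x| * (e x ^ 2 / 2 + Q x)) μ) :
    ∫⁻ x, ENNReal.ofReal (|w x| * e x ^ 2) ∂μ + ∫⁻ x, ENNReal.ofReal (|w x| * Q x) ∂μ
      ≤ ENNReal.ofReal (3 * ∫ x, |w x| * (e x ^ 2 / 2 + Q x) ∂μ) := by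
  have hg0 : ∀ x, 0 ≤ |w x| * (e x ^ 2 / 2 + Q x) := fun x => by
    have := hQ x
    positivity
  have hsq := lintegral_ofReal_le_ofReal_integral (hwg.const_mul 2)
    (.of_forall fun x => mul_nonneg zero_le_two (hg0 x)) (f := fun x => |w x| * e x ^ 2)
    (.of_forall fun x => by nlinarith [abs_nonneg (w x), hQ x])
  have hQ' := lintegral_ofReal_le_ofReal_integral hwg (.of_forall hg0) (f := fun x => |w x| * Q x)
    (.of_forall fun x => by nlinarith [abs_nonneg (w x), sq_nonneg (e x)])
  rw [integral_const_mul] at hsq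
  have hI : 0 ≤ ∫ x, |w x| * (e x ^ 2 / 2 + Q x) ∂μ := integral_nonneg hg0
  calc _ ≤ ENNReal.ofReal (2 * ∫ x, |w x| * (e x ^ 2 / 2 + Q x) ∂μ)
          + ENNReal.ofReal (∫ x, |w x| * (e x ^ 2 / 2 + Q x) ∂μ) := add_le_add hsq hQ'
    _ = _ := by rw [← ENNReal.ofReal_add (by positivity) hI]; ring_nf

theorem abs_integral_le_half_integral_add {w g f : α → ℝ} {K : ℝ}
    (hwg : Integrable (fun x => |w x| * g x) μ) (hw : Integrable w μ)
    (hf : ∀ x, |f x| ≤ |w x| * (g x / 2 + K)) :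
    |∫ x, f x ∂μ| ≤ (∫ x, |w x| * g x ∂μ) / 2 + K * ∫ x, |w x| ∂μ := by
  have hbound : Integrable (fun x => |w x| * (g x / 2 + K)) μ :=
    ((hwg.div_const 2).add (hw.abs.mul_const K)).congr (.of_forall fun x => by
      simp only [Pi.add_apply]
      ring)
  refine (norm_integral_le_of_norm_le (f := f) hbound (.of_forall hf)).trans_eq ?_
  simp only [mul_add, mul_div_assoc']
  rw [integral_add (hwg.div_const 2) (hw.abs.mul_const K), integral_div, integral_mul_const]
  ring

theorem integral_abs_mul_le_of_sign_mul_le {w g f : α → ℝ} {K B : ℝ} (hg : ∀ x, 0 ≤ g x)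
    (hwg : Integrable (fun x => w x * g x) μ) (hw : Integrable w μ)
    (hf : ∀ x, |f x| ≤ |w x| * (g x / 2 + K)) (hsign : (∀ x, 0 < w x) ∨ (∀ x, w x < 0))
    (hpos : (∀ x, 0 < w x) → (∫ x, w x * g x ∂μ) + ∫ x, f x ∂μ ≤ B)
    (hneg : (∀ x, w x < 0) → -((∫ x, w x * g x ∂μ) + ∫ x, f x ∂μ) ≤ B) :
    ∫ x, |w x| * g x ∂μ ≤ 2 * B + 2 * K * ∫ x, |w x| ∂μ ∧
      |(∫ x, w x * g x ∂μ) + ∫ x, f x ∂μ| ≤ 3 * B + 4 * K * ∫ x, |w x| ∂μ := by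
  have hf' := abs_integral_le_half_integral_add (hwg.abs_mul_of_nonneg hg) hw hf
  set I := ∫ x, |w x| * g x ∂μ
  have hI : 0 ≤ I := integral_nonneg fun x => mul_nonneg (abs_nonneg _) (hg x)
  have hw0 : 0 ≤ ∫ x, |w x| ∂μ := integral_nonneg fun x => abs_nonneg _
  have hsigned : |∫ x, w x * g x ∂μ| = I ∧ I - |∫ x, f x ∂μ| ≤ B := by
    rcases hsign with hwpos | hwneg
    · have hwg_eq : ∫ x, w x * g x ∂μ = I := by simp only [I, abs_of_pos (hwpos _)]
      rw [hwg_eq, abs_of_nonneg hI]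
      exact ⟨rfl, by linarith [hpos hwpos, neg_abs_le (∫ x, f x ∂μ)]⟩
    · have hwg_eq : ∫ x, w x * g x ∂μ = -I := by
        simp only [I, abs_of_neg (hwneg _), neg_mul, integral_neg, neg_neg]
      rw [hwg_eq, abs_neg, abs_of_nonneg hI]
      exact ⟨rfl, by linarith [hneg hwneg, le_abs_self (∫ x, f x ∂μ)]⟩
  have hI_le : I ≤ 2 * B + 2 * K * ∫ x, |w x| ∂μ := by linarith [hsigned.2]
  refine ⟨hI_le, (abs_add_le _ _).trans ?_⟩
  linarith [hsigned.1]

end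

theorem exists_smallness_constants {c M s : ℝ} (hc : 0 < c) (hM : 0 < M) (hs : 0 < s) :
    ∃ δ₀ C : ℝ, 0 < δ₀ ∧ 0 < C ∧ C ≤ 1 ∧ C * (M ^ 2 / c + 1) = 1 / 12 ∧
      δ₀ ≤ C / 12 ∧ δ₀ ≤ s / 2 ∧ δ₀ * M ≤ c * (s / 2) / 4 := by
  have hD : 1 ≤ M ^ 2 / c + 1 := by linarith [div_nonneg (sq_nonneg M) hc.le]
  set C := 1 / (12 * (M ^ 2 / c + 1))
  have hCD : C * (M ^ 2 / c + 1) = 1 / 12 := by simp only [C]; field_simp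
  refine ⟨min (C / 12) (min (s / 2) (c * s / (8 * M))), C, by positivity, by positivity,
    by nlinarith, hCD, min_le_left _ _, (min_le_right _ _).trans (min_le_left _ _), ?_⟩
  have : min (C / 12) (min (s / 2) (c * s / (8 * M))) ≤ c * s / (8 * M) :=
    (min_le_right _ _).trans (min_le_right _ _)
  rw [le_div_iff₀ (by positivity)] at this
  linarith

/-- Proposition 4.2 of the paper: smallness of the weighted relative entropy under a
one-sided bound on the functional `Y`.  Here `p'(v) = -γ v^(-γ-1)`. -/
theorem smallness_weighted_relative_entropy
    (γ : ℝ) (hγ : 1 < γ) (vstar ustar : ℝ) (hvstar : 0 < vstar) :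
    ∃ δ₀ C C₀ : ℝ, 0 < δ₀ ∧ 0 < C ∧ 0 < C₀ ∧
      ∀ ε lam : ℝ, 0 < ε → 0 < lam → ε / lam < δ₀ → lam < δ₀ →
      ∀ tv th w b₁ b₂ a v h : ℝ → ℝ,
        (∀ x, |tv x - vstar| ≤ C * δ₀) →
        (∀ x, |th x - ustar| ≤ C * δ₀) →
        (∀ x, 1 / C ≤ tv x) →
        (∀ x, Real.sqrt ((b₁ x) ^ 2 + (b₂ x) ^ 2) ≤ C * (ε / lam) * |w x|) →
        ((∀ x, 0 < w x) ∨ (∀ x, w x < 0)) →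
        Integrable b₁ → Integrable b₂ → Integrable w →
        (∫ x, |w x|) = lam →
        (∀ x, |a x| ≤ 1) →
        (∀ x, 0 < v x) →
        Integrable (fun x => w x * ((h x - th x) ^ 2 / 2 + Qrel γ (v x) (tv x))) →
        Integrable (fun x => a x * (-(b₁ x) * (-γ * (tv x) ^ (-γ - 1)) * (v x - tv x)
            + b₂ x * (h x - th x))) →
        ∀ Y : ℝ,
          Y = (∫ x, w x * ((h x - th x) ^ 2 / 2 + Qrel γ (v x) (tv x)))
              + (∫ x, a x * (-(b₁ x) * (-γ * (tv x) ^ (-γ - 1)) * (v x - tv x)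
                  + b₂ x * (h x - th x))) →
          ((∀ x, 0 < w x) → Y ≤ ε ^ 2) →
          ((∀ x, w x < 0) → -Y ≤ ε ^ 2) →
          ((∫⁻ x, ENNReal.ofReal (|w x| * (h x - th x) ^ 2))
              + (∫⁻ x, ENNReal.ofReal (|w x| * Qrel γ (v x) (tv x)))
            ≤ ENNReal.ofReal (C * ε ^ 2 / lam)) ∧
          |Y| ≤ C₀ * ε ^ 2 / lam := by
  have hγ0 : 0 < γ := by linarith
  set c₀ := γ * (3 * vstar) ^ (-γ - 1)
  set M := γ * (vstar / 2) ^ (-γ - 1)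
  obtain ⟨δ₀, C, hδ₀, hC, hC1, hCD, hδC, hδs, hδM⟩ :=
    exists_smallness_constants (c := c₀) (M := M) (by positivity) (by positivity) hvstar
  -- A small `C` only strengthens the hypotheses, while `C ε²/λ` still absorbs the error terms.
  refine ⟨δ₀, C, C, hδ₀, hC, hC, ?_⟩
  intro ε lam hε hlam hεlam hlamδ tv th w b₁ b₂ a v h htv _ _ hb hsign _ _ hw hwint ha hv hwg _ Y hY
    hYpos hYneg
  have htv' : ∀ x, |tv x - vstar| ≤ vstar / 2 := fun x => (htv x).trans (by nlinarith)
  have htv0 : ∀ x, 0 < tv x := fun x => by linarith [(abs_le.1 (htv' x)).1]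
  have hη : C * (ε / lam) * M ≤ c₀ * (vstar / 2) / 4 := by
    have : C * (ε / lam) ≤ δ₀ := by nlinarith [div_pos hε hlam]
    nlinarith [show 0 < M by positivity]
  have herr := fun x => abs_mul_add_mul_le (ha x) (hb x)
    (abs_neg_mul_rpow_le_of_abs_sub_le hγ0 hvstar (htv' x)) (c := c₀) (by positivity)
    (mul_min_le_Qrel_of_abs_sub_le hγ hvstar (htv' x) (hv x)) hη (e := h x - th x) (M := M)
  have hQ : ∀ x, 0 ≤ Qrel γ (v x) (tv x) := fun x => Qrel_nonneg hγ (htv0 x) (hv x)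
  have hg : ∀ x, 0 ≤ (h x - th x) ^ 2 / 2 + Qrel γ (v x) (tv x) := fun x => by
    have := hQ x
    positivity
  obtain ⟨hI, hYle⟩ := integral_abs_mul_le_of_sign_mul_le hg hwg hw herr hsign
    (hY ▸ hYpos) (hY ▸ hYneg)
  rw [hwint] at hI hYle
  have hK : (C * (ε / lam)) ^ 2 * (M ^ 2 / c₀ + 1) * lam = C / 12 * (ε ^ 2 / lam) := by
    calc _ = C * (C * (M ^ 2 / c₀ + 1)) * (ε ^ 2 / lam) := by field_simp
      _ = _ := by rw [hCD]; ring
  have hε2 : ε ^ 2 ≤ C / 12 * (ε ^ 2 / lam) := by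
    have : ε ^ 2 = lam * (ε ^ 2 / lam) := by field_simp
    nlinarith [show 0 < ε ^ 2 / lam by positivity]
  rw [mul_div_assoc, hY]
  refine ⟨(lintegral_abs_mul_sq_add_lintegral_abs_mul_le hQ
    (hwg.abs_mul_of_nonneg hg)).trans (ENNReal.ofReal_le_ofReal ?_), hYle.trans ?_⟩ <;>
    nlinarith [show 0 < ε ^ 2 / lam by positivity]
end
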